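/- Under the dual error setting, for each m ∈ {0, …, N−1} one has (εᵐ)ᵀ (M + Δt·Aᵀ) εᵐ ≤ √((εᵐ⁺¹)ᵀ M εᵐ⁺¹) · √((εᵐ)ᵀ M εᵐ) + Δt·‖ϱᵐ‖₋₁·‖εᵐ‖_{G*}. -/

import Mathlib

open Matrix BigOperators Finset

/-- The energy norm `‖v‖_{G*} = √(vᵀ G* v)` induced by a matrix `G`. -/
noncomputable def normG {d : ℕ} (G : Matrix (Fin d) (Fin d) ℝ) (v : Fin d → ℝ) : ℝ :=
  Real.sqrt (v ⬝ᵥ G.mulVec v)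

/-- The dual norm `‖r‖₋₁ = sup_{v ≠ 0} (rᵀ v)/‖v‖_{G*}`. -/
noncomputable def dualNorm {d : ℕ} (G : Matrix (Fin d) (Fin d) ℝ) (r : Fin d → ℝ) : ℝ :=
  ⨆ v : {v : Fin d → ℝ // v ≠ 0}, (r ⬝ᵥ (v : Fin d → ℝ)) / normG G (v : Fin d → ℝ)

/-- The symmetric part `(A + Aᵀ)/2` of a matrix. -/
noncomputable def symPart {d : ℕ} (A : Matrix (Fin d) (Fin d) ℝ) : Matrix (Fin d) (Fin d) ℝ :=
  ((1 : ℝ)/2) • (A + Aᵀ)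

/-! Testing the step equation with `εᵐ` turns the left side into
`(εᵐ)ᵀ M εᵐ⁺¹ - Δt (ϱᵐ)ᵀ εᵐ`. Both terms are bounded by Cauchy–Schwarz: for the semi-inner
product `xᵀ M y`, and for the `G*`-inner product, in which `rᵀ v = ⟪G⁻ᵀ r, v⟫_{G*}` also shows
that the supremum defining `‖r‖₋₁` is finite. -/

lemma Matrix.PosSemidef.dotProduct_mulVec_le_sqrt_mul_sqrt {n : Type*} [Fintype n]
    {M : Matrix n n ℝ} (hM : M.PosSemidef) (x y : n → ℝ) :
    x ⬝ᵥ M *ᵥ y ≤ √(x ⬝ᵥ M *ᵥ x) * √(y ⬝ᵥ M *ᵥ y) := by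
  let _ := M.toSeminormedAddCommGroup hM
  let _ := M.toInnerProductSpace hM
  have hinner (u v : n → ℝ) : inner ℝ u v = u ⬝ᵥ M *ᵥ v := by
    change (M *ᵥ v) ⬝ᵥ star u = _
    rw [star_trivial, dotProduct_comm]
  simpa only [norm_eq_sqrt_real_inner, hinner] using real_inner_le_norm x y

lemma normG_pos {d : ℕ} {G : Matrix (Fin d) (Fin d) ℝ} (hG : G.PosDef) {v : Fin d → ℝ}
    (hv : v ≠ 0) : 0 < normG G v :=
  Real.sqrt_pos.2 (hG.dotProduct_mulVec_pos hv)

lemma normG_neg {d : ℕ} (G : Matrix (Fin d) (Fin d) ℝ) (v : Fin d → ℝ) :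
    normG G (-v) = normG G v := by
  simp only [normG, mulVec_neg, neg_dotProduct, dotProduct_neg, neg_neg]

lemma dotProduct_le_normG_mul_normG {d : ℕ} {G : Matrix (Fin d) (Fin d) ℝ} (hG : G.PosDef)
    (r v : Fin d → ℝ) : r ⬝ᵥ v ≤ normG G (r ᵥ* G⁻¹) * normG G v := by
  have hr : r ⬝ᵥ v = (r ᵥ* G⁻¹) ⬝ᵥ G *ᵥ v := by
    rw [← dotProduct_mulVec, mulVec_mulVec,
      nonsing_inv_mul _ ((isUnit_iff_isUnit_det G).1 hG.isUnit), one_mulVec]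
  rw [hr]
  exact hG.posSemidef.dotProduct_mulVec_le_sqrt_mul_sqrt _ _

lemma bddAbove_dualNorm {d : ℕ} {G : Matrix (Fin d) (Fin d) ℝ} (hG : G.PosDef)
    (r : Fin d → ℝ) :
    BddAbove (Set.range fun v : {v : Fin d → ℝ // v ≠ 0} =>
      (r ⬝ᵥ (v : Fin d → ℝ)) / normG G (v : Fin d → ℝ)) := by
  refine ⟨normG G (r ᵥ* G⁻¹), ?_⟩
  rintro _ ⟨⟨v, hv⟩, rfl⟩
  exact div_le_of_le_mul₀ (normG_pos hG hv).le (Real.sqrt_nonneg _)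
    (dotProduct_le_normG_mul_normG hG r v)

lemma dotProduct_le_dualNorm_mul_normG {d : ℕ} {G : Matrix (Fin d) (Fin d) ℝ} (hG : G.PosDef)
    (r v : Fin d → ℝ) : r ⬝ᵥ v ≤ dualNorm G r * normG G v := by
  rcases eq_or_ne v 0 with rfl | hv
  · simp [normG]
  · rw [← div_le_iff₀ (normG_pos hG hv)]
    exact le_ciSup (bddAbove_dualNorm hG r) ⟨v, hv⟩

theorem stmt7_general {d : ℕ}
    (G M A : Matrix (Fin d) (Fin d) ℝ) (hG : G.PosDef) (hM : M.PosSemidef)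
    (Δt : ℝ) (hΔt : 0 < Δt) (N : ℕ)
    (ε ϱ : ℕ → Fin d → ℝ)
    (hstep : ∀ k, k < N →
      (M + Δt • Aᵀ).mulVec (ε k) = M.mulVec (ε (k + 1)) - Δt • ϱ k)
    (m : ℕ) (hm : m < N) :
    ε m ⬝ᵥ (M + Δt • Aᵀ).mulVec (ε m) ≤
      Real.sqrt (ε (m + 1) ⬝ᵥ M.mulVec (ε (m + 1))) * Real.sqrt (ε m ⬝ᵥ M.mulVec (ε m)) +
        Δt * dualNorm G (ϱ m) * normG G (ε m) := by
  have hM_term := hM.dotProduct_mulVec_le_sqrt_mul_sqrt (ε m) (ε (m + 1))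
  have hϱ_term := dotProduct_le_dualNorm_mul_normG hG (ϱ m) (-ε m)
  rw [normG_neg, dotProduct_neg] at hϱ_term
  calc ε m ⬝ᵥ (M + Δt • Aᵀ).mulVec (ε m)
      = ε m ⬝ᵥ M *ᵥ ε (m + 1) + Δt * -(ϱ m ⬝ᵥ ε m) := by
        rw [hstep m hm, dotProduct_sub, dotProduct_smul, smul_eq_mul,
          dotProduct_comm (ε m) (ϱ m)]
        ring
    _ ≤ √(ε (m + 1) ⬝ᵥ M *ᵥ ε (m + 1)) * √(ε m ⬝ᵥ M *ᵥ ε m)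
          + Δt * (dualNorm G (ϱ m) * normG G (ε m)) :=
        add_le_add (hM_term.trans_eq (mul_comm _ _)) (mul_le_mul_of_nonneg_left hϱ_term hΔt.le)
    _ = _ := by ring

theorem stmt7 {d : ℕ} (hd : 1 ≤ d)
    (G M A : Matrix (Fin d) (Fin d) ℝ) (hG : G.PosDef) (hM : M.PosSemidef)
    (Δt : ℝ) (hΔt : 0 < Δt) (N : ℕ) (hN : 1 ≤ N)
    (ε ϱ : ℕ → Fin d → ℝ) (hεN : ε N = 0)
    (hstep : ∀ k, k < N →
      (M + Δt • Aᵀ).mulVec (ε k) = M.mulVec (ε (k + 1)) - Δt • ϱ k)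
    (m : ℕ) (hm : m < N) :
    ε m ⬝ᵥ (M + Δt • Aᵀ).mulVec (ε m) ≤
      Real.sqrt (ε (m + 1) ⬝ᵥ M.mulVec (ε (m + 1))) * Real.sqrt (ε m ⬝ᵥ M.mulVec (ε m)) +
        Δt * dualNorm G (ϱ m) * normG G (ε m) :=
  stmt7_general G M A hG hM Δt hΔt N ε ϱ hstep m hm
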